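/- In the automaton group of automaton 887, for all n ≥ 2: (ca)^{2^n}|_{111} = (ca)^{2^{n-1}} and (ca)^{2^n}(1^∞) = (111)^{n-1}(1010)1^∞. In particular (ca)^n(1^∞) ≠ 1^∞ for all n ≥ 1, so ca has infinite order. -/

import Mathlib

namespace Stmt12


/-- A Mealy automaton over the binary alphabet with state set `S`. -/
structure Mealy (S : Type) where
  /-- transition function -/
  δ : S → Bool → S
  /-- output function -/
  τ : S → Bool → Bool

namespace Mealy

variable {S : Type} (M : Mealy S)

/-- The state reached from `q` after reading the first `n` letters of `w`. -/
def stateAt (q : S) (w : ℕ → Bool) : ℕ → S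
  | 0 => q
  | n + 1 => M.δ (stateAt q w n) (w n)

/-- The action of state `q` on infinite words. -/
def act (q : S) (w : ℕ → Bool) : ℕ → Bool :=
  fun n => M.τ (M.stateAt q w n) (w n)

/-- The inverse automaton (for automata whose output functions are involutions). -/
def inv : Mealy S := ⟨fun q b => M.δ q (M.τ q b), M.τ⟩

theorem stateAt_inv_act (h : ∀ q b, M.τ q (M.τ q b) = b) (q : S) (w : ℕ → Bool) :
    ∀ n, M.inv.stateAt q (M.act q w) n = M.stateAt q w n := by
  intro n
  induction n with
  | zero => rfl
  | succ n ih =>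
    show M.inv.δ (M.inv.stateAt q (M.act q w) n) (M.act q w n) = M.δ (M.stateAt q w n) (w n)
    rw [ih]
    show M.δ (M.stateAt q w n) (M.τ (M.stateAt q w n) (M.τ (M.stateAt q w n) (w n))) = _
    rw [h]

theorem inv_act (h : ∀ q b, M.τ q (M.τ q b) = b) (q : S) (w : ℕ → Bool) :
    M.inv.act q (M.act q w) = w := by
  funext n
  show M.inv.τ (M.inv.stateAt q (M.act q w) n) (M.act q w n) = w n
  rw [stateAt_inv_act M h]
  show M.τ (M.stateAt q w n) (M.τ (M.stateAt q w n) (w n)) = w n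
  rw [h]

theorem inv_inv (h : ∀ q b, M.τ q (M.τ q b) = b) : M.inv.inv = M := by
  obtain ⟨d, t⟩ := M
  simp only [inv]
  congr 1
  funext q b
  exact congrArg (d q) (h q b)

/-- The permutation of the set of infinite binary words defined by state `q`. -/
def perm (h : ∀ q b, M.τ q (M.τ q b) = b) (q : S) : Equiv.Perm (ℕ → Bool) where
  toFun := M.act q
  invFun := M.inv.act q
  left_inv := fun w => M.inv_act h q w
  right_inv := fun w => by
    have h2 : ∀ q b, M.inv.τ q (M.inv.τ q b) = b := h
    have := M.inv.inv_act h2 q w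
    rwa [M.inv_inv h] at this

end Mealy

/-- Prepend a finite word to an infinite word. -/
def cat (u : List Bool) (w : ℕ → Bool) : ℕ → Bool :=
  fun n => u.getD n (w (n - u.length))

/-- The (semantic) restriction of a transformation of infinite words to the
subtree indexed by the finite word `u`. -/
def resW (f : (ℕ → Bool) → ℕ → Bool) (u : List Bool) : (ℕ → Bool) → ℕ → Bool :=
  fun w n => f (cat u w) (n + u.length)

/-- The periodic infinite word with period `u`. -/
def per (u : List Bool) : ℕ → Bool := fun n => u.getD (n % u.length) false

/-- Left-shift equivalence of infinite words: they share a common infinite tail. -/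
def seq (u v : ℕ → Bool) : Prop := ∃ k l : ℕ, ∀ n, u (n + k) = v (n + l)

inductive St : Type
  | a | b | c
deriving DecidableEq

instance instFintypeSt : Fintype St := ⟨{St.a, St.b, St.c}, fun x => by cases x <;> simp⟩

/-- Automaton 887. -/
def M : Mealy St where
  δ := fun q x => match q, x with
    | .a, false => .b | .a, true => .b
    | .b, false => .c | .b, true => .c
    | .c, false => .b | .c, true => .a
  τ := fun q x => match q with
    | .a => !x
    | .b => x
    | .c => x

theorem M_inv : ∀ q x, M.τ q (M.τ q x) = x := by decide

/-- The automorphism of the binary tree boundary defined by state `a`. -/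
def a : Equiv.Perm (ℕ → Bool) := M.perm M_inv .a

/-- The automorphism of the binary tree boundary defined by state `b`. -/
def b : Equiv.Perm (ℕ → Bool) := M.perm M_inv .b

/-- The automorphism of the binary tree boundary defined by state `c`. -/
def c : Equiv.Perm (ℕ → Bool) := M.perm M_inv .c

/-!
Write `1^∞` for the constant word `fun _ => true`. By the wreath recursion of 887,
`ca : 0w ↦ 1·ab(w), 1w ↦ 0w`, `ab : xw ↦ x̄·bc(w)` and `bc : 1w ↦ 1·ca(w)`. Hence `(ca)²` fixes the
first letter and acts below it as `ab`, `(ab)²` acts below the first letter as `(bc)²`, and `bc`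
acts below `1` as `ca`; so `(ca)^(4m)` restricts at `111` to `(ca)^(2m)`. As `1^∞ = 111·1^∞`,
iterating this from `(ca)²(1^∞) = 1010·1^∞` gives the orbit of `1^∞` under `(ca)^(2^n)`.
A power `(ca)^n` with `n` odd or `n ≡ 2 (mod 4)` changes the first or second letter of `1^∞`, and
for `n ≡ 0 (mod 4)` we have `(ca)^n(1^∞) = 111·(ca)^(n/2)(1^∞)`, so no nontrivial power of `ca`
fixes `1^∞`.
-/
theorem cat_nil (w : ℕ → Bool) : cat [] w = w := by
  funext n
  simp [cat]

theorem cat_cons_zero (x : Bool) (u : List Bool) (w : ℕ → Bool) : cat (x :: u) w 0 = x := by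
  simp [cat]

theorem cat_cons_succ (x : Bool) (u : List Bool) (w : ℕ → Bool) (n : ℕ) :
    cat (x :: u) w (n + 1) = cat u w n := by
  simp [cat]

theorem cat_add_length (u : List Bool) (w : ℕ → Bool) (n : ℕ) : cat u w (n + u.length) = w n := by
  simp [cat]

theorem cat_append (u v : List Bool) (w : ℕ → Bool) : cat (u ++ v) w = cat u (cat v w) := by
  induction u with
  | nil => rw [List.nil_append, cat_nil]
  | cons x u ih =>
    funext n
    cases n with
    | zero => rw [List.cons_append, cat_cons_zero, cat_cons_zero]
    | succ n => rw [List.cons_append, cat_cons_succ, cat_cons_succ, ih]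

theorem cat_injective (u : List Bool) : Function.Injective (cat u) := fun w w' h => by
  funext n
  rw [← cat_add_length u w, ← cat_add_length u w', h]

theorem cat_replicate_const (k : ℕ) (x : Bool) :
    cat (List.replicate k x) (fun _ => x) = fun _ => x := by
  funext n
  simp only [cat, List.getD_eq_getElem?_getD, List.getElem?_replicate]
  split_ifs <;> rfl

theorem cat_true_const : cat [true] (fun _ => true) = fun _ => true :=
  cat_replicate_const 1 true

theorem resW_eq_of_apply_cat {f g : (ℕ → Bool) → ℕ → Bool} {u : List Bool}
    (h : ∀ w, f (cat u w) = cat u (g w)) : resW f u = g := by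
  funext w n
  rw [resW, h, cat_add_length]

theorem pow_apply_cat {f g : Equiv.Perm (ℕ → Bool)} {u : List Bool}
    (h : ∀ w, f (cat u w) = cat u (g w)) (m : ℕ) (w : ℕ → Bool) :
    (f ^ m) (cat u w) = cat u ((g ^ m) w) := by
  have hsemi : Function.Semiconj (cat u) g f := fun w => (h w).symm
  simp only [Equiv.Perm.coe_pow]
  exact (hsemi.iterate_right m w).symm

namespace Mealy

variable {S : Type} (N : Mealy S)

theorem stateAt_cat_singleton_succ (q : S) (x : Bool) (w : ℕ → Bool) (n : ℕ) :
    N.stateAt q (cat [x] w) (n + 1) = N.stateAt (N.δ q x) w n := by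
  induction n with
  | zero => simp [stateAt, cat]
  | succ n ih =>
    rw [stateAt, ih, cat_cons_succ, cat_nil]
    rfl

theorem act_cat_singleton (q : S) (x : Bool) (w : ℕ → Bool) :
    N.act q (cat [x] w) = cat [N.τ q x] (N.act (N.δ q x) w) := by
  funext n
  cases n with
  | zero => simp [act, stateAt, cat]
  | succ n =>
    rw [act, stateAt_cat_singleton_succ, cat_cons_succ, cat_cons_succ, cat_nil, cat_nil]
    rfl

end Mealy

open Equiv.Perm (mul_apply)

theorem M_inv_eq : M.inv = M := by
  have h : (fun q x => M.δ q (M.τ q x)) = M.δ := by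
    funext q x
    cases q <;> cases x <;> rfl
  rw [Mealy.inv, h]

theorem b_apply_b (w : ℕ → Bool) : b (b w) = w := by
  have h := M.inv_act M_inv .b w
  rwa [M_inv_eq] at h

theorem a_apply_cat (x : Bool) (w : ℕ → Bool) : a (cat [x] w) = cat [!x] (b w) := by
  cases x <;> exact M.act_cat_singleton .a _ w

theorem b_apply_cat (x : Bool) (w : ℕ → Bool) : b (cat [x] w) = cat [x] (c w) := by
  cases x <;> exact M.act_cat_singleton .b _ w

theorem c_apply_cat_true (w : ℕ → Bool) : c (cat [true] w) = cat [true] (a w) :=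
  M.act_cat_singleton .c true w

theorem c_apply_cat_false (w : ℕ → Bool) : c (cat [false] w) = cat [false] (b w) :=
  M.act_cat_singleton .c false w

theorem ca_apply_cat_true (w : ℕ → Bool) : (c * a) (cat [true] w) = cat [false] w := by
  rw [mul_apply, a_apply_cat, Bool.not_true, c_apply_cat_false, b_apply_b]

theorem ca_apply_cat_false (w : ℕ → Bool) : (c * a) (cat [false] w) = cat [true] ((a * b) w) := by
  rw [mul_apply, a_apply_cat, Bool.not_false, c_apply_cat_true, mul_apply]

theorem ab_apply_cat (x : Bool) (w : ℕ → Bool) : (a * b) (cat [x] w) = cat [!x] ((b * c) w) := by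
  rw [mul_apply, b_apply_cat, a_apply_cat, mul_apply]

theorem bc_apply_cat_true (w : ℕ → Bool) : (b * c) (cat [true] w) = cat [true] ((c * a) w) := by
  rw [mul_apply, c_apply_cat_true, b_apply_cat, mul_apply]

theorem ca_sq_apply_cat (x : Bool) (w : ℕ → Bool) :
    ((c * a) ^ 2) (cat [x] w) = cat [x] ((a * b) w) := by
  cases x
  · rw [sq, mul_apply, ca_apply_cat_false, ca_apply_cat_true]
  · rw [sq, mul_apply, ca_apply_cat_true, ca_apply_cat_false]

theorem ab_sq_apply_cat (x : Bool) (w : ℕ → Bool) :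
    ((a * b) ^ 2) (cat [x] w) = cat [x] (((b * c) ^ 2) w) := by
  rw [sq, mul_apply, ab_apply_cat, ab_apply_cat, Bool.not_not, sq, mul_apply]
  rfl

theorem ca_pow_four_mul_apply_cat (m : ℕ) (w : ℕ → Bool) :
    ((c * a) ^ (4 * m)) (cat [true, true, true] w) =
      cat [true, true, true] (((c * a) ^ (2 * m)) w) := by
  have htt (v : ℕ → Bool) : cat [true, true] v = cat [true] (cat [true] v) :=
    cat_append [true] [true] v
  have httt (v : ℕ → Bool) : cat [true, true, true] v = cat [true] (cat [true, true] v) :=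
    cat_append [true] [true, true] v
  rw [httt, show 4 * m = 2 * (2 * m) by ring, pow_mul, pow_apply_cat (ca_sq_apply_cat true),
    htt, pow_mul, pow_apply_cat (ab_sq_apply_cat true), ← pow_mul,
    pow_apply_cat bc_apply_cat_true, httt, htt]

theorem ca_pow_two_pow_apply_cat (k : ℕ) (w : ℕ → Bool) :
    ((c * a) ^ 2 ^ (k + 2)) (cat [true, true, true] w) =
      cat [true, true, true] (((c * a) ^ 2 ^ (k + 1)) w) := by
  rw [show 2 ^ (k + 2) = 4 * 2 ^ k by ring, show 2 ^ (k + 1) = 2 * 2 ^ k by ring]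
  exact ca_pow_four_mul_apply_cat _ w

theorem ca_apply_const_true : (c * a) (fun _ => true) = cat [false] (fun _ => true) := by
  simpa only [cat_true_const] using ca_apply_cat_true (fun _ => true)

theorem ab_apply_const_true : (a * b) (fun _ => true) = cat [false] ((b * c) (fun _ => true)) := by
  simpa only [cat_true_const, Bool.not_true] using ab_apply_cat true (fun _ => true)

theorem ca_sq_apply_const_true :
    ((c * a) ^ 2) (fun _ => true) = cat [true, false, true, false] (fun _ => true) := by
  have hbc : (b * c) (fun _ => true) = cat [true] ((c * a) (fun _ => true)) := by
    simpa only [cat_true_const] using bc_apply_cat_true (fun _ => true)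
  have hca2 : ((c * a) ^ 2) (fun _ => true) = cat [true] ((a * b) (fun _ => true)) := by
    simpa only [cat_true_const] using ca_sq_apply_cat true (fun _ => true)
  rw [hca2, ab_apply_const_true, hbc, ca_apply_const_true]
  simp only [← cat_append, List.singleton_append]

theorem ca_pow_two_pow_apply_const_true (k : ℕ) :
    ((c * a) ^ 2 ^ (k + 1)) (fun _ => true) =
      cat (List.replicate (3 * k) true ++ [true, false, true, false]) (fun _ => true) := by
  induction k with
  | zero => exact ca_sq_apply_const_true
  | succ k ih =>
    have hones : (fun _ => true : ℕ → Bool) = cat [true, true, true] (fun _ => true) :=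
      (cat_replicate_const 3 true).symm
    have hrep : List.replicate (3 * (k + 1)) true =
        [true, true, true] ++ List.replicate (3 * k) true := by
      rw [Nat.mul_succ, add_comm, List.replicate_add]
      rfl
    conv_lhs => rw [hones, ca_pow_two_pow_apply_cat, ih, ← cat_append]
    rw [hrep, List.append_assoc]

theorem ca_pow_odd_apply_const_true_zero (m : ℕ) :
    ((c * a) ^ (2 * m + 1)) (fun _ => true) 0 = false := by
  rw [pow_succ, mul_apply, ca_apply_const_true, pow_mul, pow_apply_cat (ca_sq_apply_cat false),
    cat_cons_zero]

theorem ca_pow_two_mul_odd_apply_const_true_one (j : ℕ) :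
    ((c * a) ^ (2 * (2 * j + 1))) (fun _ => true) 1 = false := by
  rw [pow_mul, ← cat_true_const, pow_apply_cat (ca_sq_apply_cat true), cat_cons_succ, cat_nil,
    pow_succ, mul_apply, ab_apply_const_true, pow_mul, pow_apply_cat (ab_sq_apply_cat false),
    cat_cons_zero]

theorem ca_pow_apply_const_true_ne (n : ℕ) (hn : n ≠ 0) :
    ((c * a) ^ n) (fun _ => true) ≠ fun _ => true := by
  induction n using Nat.strong_induction_on with
  | _ n ih =>
    intro h
    obtain ⟨k, rfl | rfl⟩ := Nat.even_or_odd' n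
    · obtain ⟨j, rfl | rfl⟩ := Nat.even_or_odd' k
      · refine ih (2 * j) (by omega) (by omega) (cat_injective [true, true, true] ?_)
        have hones : cat [true, true, true] (fun _ => true) = fun _ => true :=
          cat_replicate_const 3 true
        rw [← ca_pow_four_mul_apply_cat, hones, show 4 * j = 2 * (2 * j) by ring, h]
      · have h1 := congrFun h 1
        rw [ca_pow_two_mul_odd_apply_const_true_one] at h1
        exact Bool.false_ne_true h1
    · have h0 := congrFun h 0
      rw [ca_pow_odd_apply_const_true_zero] at h0
      exact Bool.false_ne_true h0

/-- In the automaton group of automaton 887, for all `n ≥ 2`: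
`(ca)^(2^n)|₁₁₁ = (ca)^(2^(n-1))` and `(ca)^(2^n)(1^∞) = (111)^(n-1) 1010 1^∞`.
In particular `(ca)ⁿ(1^∞) ≠ 1^∞` for all `n ≥ 1`, so `ca` has infinite order. -/
theorem automaton887_ca :
    (∀ n : ℕ, 2 ≤ n →
      resW ⇑((c * a) ^ 2 ^ n) [true, true, true] = ⇑((c * a) ^ 2 ^ (n - 1)) ∧
      ⇑((c * a) ^ 2 ^ n) (fun _ => true) =
        cat (List.replicate (3 * (n - 1)) true ++ [true, false, true, false]) (fun _ => true)) ∧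
    (∀ n : ℕ, 1 ≤ n → ⇑((c * a) ^ n) (fun _ => true) ≠ (fun _ => true)) ∧
    (∀ n : ℕ, 1 ≤ n → (c * a) ^ n ≠ 1) := by
  refine ⟨fun n hn => ⟨?_, ?_⟩, fun n hn => ca_pow_apply_const_true_ne n (by omega),
    fun n hn h => ca_pow_apply_const_true_ne n (by omega) (by rw [h]; rfl)⟩
  · obtain ⟨k, rfl⟩ := Nat.exists_eq_add_of_le' hn
    exact resW_eq_of_apply_cat (ca_pow_two_pow_apply_cat k)
  · obtain ⟨k, rfl⟩ : ∃ k, n = k + 1 := ⟨n - 1, by omega⟩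
    exact ca_pow_two_pow_apply_const_true k

end Stmt12
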